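/- arXiv:2103.16873 — 5 statements merged into one kernel-verified Lean document; each statement's English description precedes it below -/
import Mathlib

section
/- The double series Σ_{m=1}^∞ Σ_{n=1}^∞ 1/(m^s n^t (m+n)^u) converges absolutely for all complex numbers s, t, u satisfying Re(s+u) > 1, Re(t+u) > 1 and Re(s+t+u) > 2. -/
open Complex

/-- The Tornheim double zeta function, as a double series over positive integers. -/
noncomputable def tornheim (s t u : ℂ) : ℂ :=
  ∑' p : ℕ+ × ℕ+, 1 / ((p.1 : ℂ) ^ s * (p.2 : ℂ) ^ t * ((p.1 : ℂ) + (p.2 : ℂ)) ^ u)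

/-!
With `a, b, c` the real parts of `s, t, u`, the terms have norm `m^(-a) n^(-b) (m+n)^(-c)`.
On the half `m ≤ n` we have `n ≤ m + n ≤ 2n`, so the term is at most
`2^|c| m^(-a) n^(-(b+c))`; moving the part `n^(-(b+c-q))` of the `n`-power onto `m` (allowed
since `m ≤ n` and `q ≤ b + c`) bounds it by `2^|c| m^(-(a+b+c-q)) n^(-q)`, a product of two
convergent `p`-series as soon as `1 < q` and `1 < a + b + c - q`. The hypotheses leave room for
such a `q`, e.g. `q = min (a + c) (b + c) ((a + b + c) / 2)`, and the half `n ≤ m` is symmetric.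
-/

lemma rpow_neg_add_le_two_rpow_abs_mul {m n : ℝ} (c : ℝ) (hm : 0 ≤ m) (hn : 0 < n)
    (hmn : m ≤ n) : (m + n) ^ (-c) ≤ 2 ^ |c| * n ^ (-c) := by
  rcases le_or_gt 0 c with hc | hc
  · calc (m + n) ^ (-c) ≤ n ^ (-c) :=
          Real.rpow_le_rpow_of_nonpos hn (by linarith) (by linarith)
      _ ≤ 2 ^ |c| * n ^ (-c) :=
          le_mul_of_one_le_left (by positivity) (Real.one_le_rpow one_le_two (abs_nonneg c))
  · calc (m + n) ^ (-c) ≤ (2 * n) ^ (-c) :=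
          Real.rpow_le_rpow (by linarith) (by linarith) (by linarith)
      _ = 2 ^ |c| * n ^ (-c) := by
          rw [abs_of_neg hc, Real.mul_rpow zero_le_two hn.le]

lemma rpow_neg_mul_rpow_neg_mul_add_rpow_neg_le_of_le {m n : ℝ} (a : ℝ) {b c q : ℝ}
    (hm : 0 < m) (hmn : m ≤ n) (hq : q ≤ b + c) :
    m ^ (-a) * n ^ (-b) * (m + n) ^ (-c) ≤ 2 ^ |c| * (m ^ (-(a + b + c - q)) * n ^ (-q)) := by
  have hn : 0 < n := hm.trans_le hmn
  calc m ^ (-a) * n ^ (-b) * (m + n) ^ (-c)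
      ≤ m ^ (-a) * n ^ (-b) * (2 ^ |c| * n ^ (-c)) := by
        gcongr
        exact rpow_neg_add_le_two_rpow_abs_mul c hm.le hn hmn
    _ = 2 ^ |c| * (m ^ (-a) * n ^ (-(b + c - q)) * n ^ (-q)) := by
        rw [mul_assoc (m ^ (-a)) (n ^ (-(b + c - q))), ← Real.rpow_add hn,
          show -(b + c - q) + -q = -b + -c by ring, Real.rpow_add hn]
        ring
    _ ≤ 2 ^ |c| * (m ^ (-a) * m ^ (-(b + c - q)) * n ^ (-q)) := by
        have : n ^ (-(b + c - q)) ≤ m ^ (-(b + c - q)) :=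
          Real.rpow_le_rpow_of_nonpos hm hmn (by linarith)
        gcongr
    _ = 2 ^ |c| * (m ^ (-(a + b + c - q)) * n ^ (-q)) := by
        rw [← Real.rpow_add hm]
        ring_nf

lemma rpow_neg_mul_rpow_neg_mul_add_rpow_neg_le {m n a b c q : ℝ} (hm : 0 < m) (hn : 0 < n)
    (hqa : q ≤ a + c) (hqb : q ≤ b + c) :
    m ^ (-a) * n ^ (-b) * (m + n) ^ (-c) ≤
      2 ^ |c| * (m ^ (-(a + b + c - q)) * n ^ (-q) + m ^ (-q) * n ^ (-(a + b + c - q))) := by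
  rcases le_total m n with hmn | hnm
  · calc m ^ (-a) * n ^ (-b) * (m + n) ^ (-c)
        ≤ 2 ^ |c| * (m ^ (-(a + b + c - q)) * n ^ (-q)) :=
          rpow_neg_mul_rpow_neg_mul_add_rpow_neg_le_of_le a hm hmn hqb
      _ ≤ _ := by gcongr; exact le_add_of_nonneg_right (by positivity)
  · calc m ^ (-a) * n ^ (-b) * (m + n) ^ (-c) = n ^ (-b) * m ^ (-a) * (n + m) ^ (-c) := by
          rw [add_comm]; ring
      _ ≤ 2 ^ |c| * (n ^ (-(b + a + c - q)) * m ^ (-q)) :=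
          rpow_neg_mul_rpow_neg_mul_add_rpow_neg_le_of_le b hn hnm hqa
      _ ≤ _ := by
          rw [show b + a + c - q = a + b + c - q by ring, mul_comm (n ^ _)]
          gcongr
          exact le_add_of_nonneg_left (by positivity)

lemma summable_pnat_rpow_neg {p : ℝ} (hp : 1 < p) : Summable fun n : ℕ+ => (n : ℝ) ^ (-p) :=
  (Real.summable_nat_rpow.mpr (neg_lt_neg hp)).comp_injective PNat.coe_injective

lemma summable_pnat_prod_rpow_neg_mul_rpow_neg {p q : ℝ} (hp : 1 < p) (hq : 1 < q) :
    Summable fun x : ℕ+ × ℕ+ => (x.1 : ℝ) ^ (-p) * (x.2 : ℝ) ^ (-q) :=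
  (summable_pnat_rpow_neg hp).mul_of_nonneg (summable_pnat_rpow_neg hq)
    (fun _ => by positivity) (fun _ => by positivity)

lemma summable_pnat_prod_rpow_neg_mul_rpow_neg_mul_add_rpow_neg {a b c : ℝ}
    (hac : 1 < a + c) (hbc : 1 < b + c) (habc : 2 < a + b + c) :
    Summable fun x : ℕ+ × ℕ+ =>
      (x.1 : ℝ) ^ (-a) * (x.2 : ℝ) ^ (-b) * ((x.1 : ℝ) + x.2) ^ (-c) := by
  set q := min (min (a + c) (b + c)) ((a + b + c) / 2)
  have hq : 1 < q := lt_min (lt_min hac hbc) (by linarith)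
  have hp : 1 < a + b + c - q := by linarith [min_le_right (min (a + c) (b + c)) ((a + b + c) / 2)]
  refine Summable.of_nonneg_of_le (fun _ => by positivity) (fun x => ?_)
    (((summable_pnat_prod_rpow_neg_mul_rpow_neg hp hq).add
      (summable_pnat_prod_rpow_neg_mul_rpow_neg hq hp)).mul_left (2 ^ |c|))
  exact rpow_neg_mul_rpow_neg_mul_add_rpow_neg_le (by positivity) (by positivity)
    ((min_le_left _ _).trans (min_le_left _ _)) ((min_le_left _ _).trans (min_le_right _ _))

lemma norm_one_div_pnat_cpow_mul_cpow_mul_add_cpow (m n : ℕ+) (s t u : ℂ) :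
    ‖1 / ((m : ℂ) ^ s * (n : ℂ) ^ t * ((m : ℂ) + (n : ℂ)) ^ u)‖ =
      (m : ℝ) ^ (-s.re) * (n : ℝ) ^ (-t.re) * ((m : ℝ) + n) ^ (-u.re) := by
  have hmn : (m : ℂ) + (n : ℂ) = ((m + n : ℕ) : ℂ) := by push_cast; rfl
  rw [hmn, norm_div, norm_one, norm_mul, norm_mul, one_div,
    norm_natCast_cpow_of_pos m.pos, norm_natCast_cpow_of_pos n.pos,
    norm_natCast_cpow_of_pos (by positivity), Real.rpow_neg (by positivity),
    Real.rpow_neg (by positivity), Real.rpow_neg (by positivity), mul_inv, mul_inv]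
  push_cast
  rfl

theorem tornheim_summable (s t u : ℂ) (h1 : 1 < (s + u).re) (h2 : 1 < (t + u).re)
    (h3 : 2 < (s + t + u).re) :
    Summable (fun p : ℕ+ × ℕ+ =>
      ‖1 / ((p.1 : ℂ) ^ s * (p.2 : ℂ) ^ t * ((p.1 : ℂ) + (p.2 : ℂ)) ^ u)‖) := by
  simp only [add_re] at h1 h2 h3
  simp only [norm_one_div_pnat_cpow_mul_cpow_mul_add_cpow]
  exact summable_pnat_prod_rpow_neg_mul_rpow_neg_mul_add_rpow_neg h1 h2 h3
end

section
/- For all complex numbers s, t, u with Re s > 1, Re t > 1 and Re u > 1, one has (1 − e^{-2πis})(1 − e^{-2πit})(e^{-πi(s+t+u)} − 1) T(s,t,u) = (e^{-2πi(s+t)} − 1) S_1(s,t,u) + e^{-πis}(1 − e^{-2πit}) S_1(u,s,t) + e^{-πit}(1 − e^{-2πis}) S_1(t,u,s). -/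
open Real Complex

/-- The symmetric Tornheim double zeta function `S₁`. -/
noncomputable def S₁ (s t u : ℂ) : ℂ :=
  (1 + exp (-π * I * (s + t + u))) * tornheim s t u
    + (exp (-π * I * s) + exp (-π * I * (t + u))) * tornheim u s t
    + (exp (-π * I * t) + exp (-π * I * (u + s))) * tornheim t u s

/-- The symmetric Tornheim double zeta function `S₂`. -/
noncomputable def S₂ (s t u : ℂ) : ℂ :=
  (exp (-π * I * u) + exp (-π * I * (s + t))) * tornheim s t u
    + (exp (-π * I * t) + exp (-π * I * (u + s))) * tornheim u s t
    + (exp (-π * I * s) + exp (-π * I * (t + u))) * tornheim t u s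

/-- The symmetric Tornheim double zeta function `S₃`. -/
noncomputable def S₃ (s t u : ℂ) : ℂ :=
  tornheim s t u + tornheim u s t + tornheim t u s

/-- The symmetric Tornheim double zeta function `S₄`. -/
noncomputable def S₄ (s t u : ℂ) : ℂ :=
  -tornheim s t u + tornheim u s t + tornheim t u s


theorem corollary_i (s t u : ℂ) (hs : 1 < s.re) (ht : 1 < t.re) (hu : 1 < u.re) :
    (1 - exp (-2 * π * I * s)) * (1 - exp (-2 * π * I * t))
        * (exp (-π * I * (s + t + u)) - 1) * tornheim s t u
      = (exp (-2 * π * I * (s + t)) - 1) * S₁ s t u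
        + exp (-π * I * s) * (1 - exp (-2 * π * I * t)) * S₁ u s t
        + exp (-π * I * t) * (1 - exp (-2 * π * I * s)) * S₁ t u s := by
  have key : ∀ x y : ℂ, Complex.exp (x + y) = Complex.exp x * Complex.exp y := Complex.exp_add
  simp only [S₁,
    show (-2 * (π:ℂ) * I * s) = (-π * I * s) + (-π * I * s) by ring,
    show (-2 * (π:ℂ) * I * t) = (-π * I * t) + (-π * I * t) by ring,
    show (-2 * (π:ℂ) * I * (s + t)) = (-π * I * s) + (-π * I * s) + ((-π * I * t) + (-π * I * t)) by ring,
    show (-(π:ℂ) * I * (s + t + u)) = (-π * I * s) + ((-π * I * t) + (-π * I * u)) by ring,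
    show (-(π:ℂ) * I * (u + s + t)) = (-π * I * s) + ((-π * I * t) + (-π * I * u)) by ring,
    show (-(π:ℂ) * I * (t + u + s)) = (-π * I * s) + ((-π * I * t) + (-π * I * u)) by ring,
    show (-(π:ℂ) * I * (t + u)) = (-π * I * t) + (-π * I * u) by ring,
    show (-(π:ℂ) * I * (u + s)) = (-π * I * u) + (-π * I * s) by ring,
    show (-(π:ℂ) * I * (s + t)) = (-π * I * s) + (-π * I * t) by ring,
    key]
  ring
end

section
/- For all complex numbers s, t, u with Re s > 1, Re t > 1 and Re u > 1, one has (1 − e^{-πis})(1 − e^{-πit})(1 + e^{-πiu}) T(s,t,u) = (1 + e^{-πiu})(1 + e^{-πi(s+t)}) S_3(s,t,u) − S_1(u,s,t) − S_1(t,u,s). -/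
open Real Complex

theorem corollary_iv (s t u : ℂ) (hs : 1 < s.re) (ht : 1 < t.re) (hu : 1 < u.re) :
    (1 - exp (-π * I * s)) * (1 - exp (-π * I * t)) * (1 + exp (-π * I * u)) * tornheim s t u
      = (1 + exp (-π * I * u)) * (1 + exp (-π * I * (s + t))) * S₃ s t u
        - S₁ u s t - S₁ t u s := by
  simp only [S₁, S₃, mul_add, Complex.exp_add]
  ring
end

section
/- For all complex numbers s, t, u with Re s > 1, Re t > 1 and Re u > 1, one has S_1(s,t,u) = ∫_0^1 H(s,a) H(t,a) H(u,1−a) da, where H(s,a) := e^{-πis} F(s,1−a) + F(s,a). -/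
open Real Complex

/-- The periodic zeta function `F(s,a) = Σ_{n≥1} e^{2πina}/n^s`. -/
noncomputable def periodicZeta (s : ℂ) (a : ℝ) : ℂ :=
  ∑' n : ℕ+, Complex.exp (2 * π * I * n * a) / (n : ℂ) ^ s

/-- `H(s,a) = e^{-πis} F(s,1-a) + F(s,a)`. -/
noncomputable def Hfun (s : ℂ) (a : ℝ) : ℂ :=
  Complex.exp (-π * I * s) * periodicZeta s (1 - a) + periodicZeta s a

/-!
Write `e(x) = exp(2πix)`. For `Re s > 1`, `H(s, ·)` is an absolutely convergent trigonometric
series over the nonzero frequencies: `H(s, a) = Σ_{k ≠ 0} c_s(k) e(ka)` with `c_s(k) = k^{-s}` for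
`k > 0` and `c_s(k) = e^{-πis} |k|^{-s}` for `k < 0`, and `H(u, 1 - a) = Σ_l c_u(l) e(-la)`.
Integrating the triple product termwise over `[0, 1]`, orthogonality of the `e(k ·)` keeps exactly
the triples with `j + k = l`. Sorted by signs: `j, k, l` all of one sign contribute
`(1 + e^{-πi(s+t+u)}) T(s, t, u)`, while `|j| = |k| + |l|` and `|k| = |j| + |l|` contribute the
`T(t, u, s)` and `T(u, s, t)` terms of `S₁`.
-/

open scoped FourierTransform

section FourierSeries

open intervalIntegral

lemma fourierChar_intCast (k : ℤ) : 𝐞 k = 1 :=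
  Circle.exp_two_pi_mul_int k

lemma fourierChar_intCast_mul_one_sub (k : ℤ) (a : ℝ) : 𝐞 (k * (1 - a)) = 𝐞 ((-k : ℤ) * a) := by
  rw [show (k : ℝ) * (1 - a) = k + (-k : ℤ) * a by push_cast; ring, AddChar.map_add_eq_mul,
    fourierChar_intCast, one_mul]

lemma integral_fourierChar_intCast_mul (k : ℤ) :
    ∫ a in (0 : ℝ)..1, (𝐞 (k * a) : ℂ) = if k = 0 then 1 else 0 := by
  split_ifs with hk
  · simp [hk]
  have hc : 2 * π * I * k ≠ 0 := by simp [hk]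
  have hexp : ∀ a : ℝ, (𝐞 (k * a) : ℂ) = exp (2 * π * I * k * a) := fun a => by
    rw [Real.fourierChar_apply]
    push_cast
    ring_nf
  simp_rw [hexp, integral_exp_mul_complex hc, ← hexp]
  simp [fourierChar_intCast]

lemma norm_mul_fourierChar (c : ℂ) (x : ℝ) : ‖c * 𝐞 x‖ = ‖c‖ := by
  rw [norm_mul, Circle.norm_coe, mul_one]

variable {ι ι₁ ι₂ ι₃ : Type*}

lemma summable_norm_mul_fourierChar {c : ι → ℂ} (hc : Summable (‖c ·‖)) (θ : ι → ℤ) (a : ℝ) :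
    Summable (fun i => ‖c i * 𝐞 (θ i * a)‖) := by
  simpa only [norm_mul_fourierChar] using hc

lemma hasSum_intervalIntegral_tsum_fourierChar [Countable ι] {c : ι → ℂ}
    (hc : Summable (‖c ·‖)) (φ : ι → ℤ) :
    HasSum (fun i => if φ i = 0 then c i else 0)
      (∫ a in (0 : ℝ)..1, ∑' i, c i * 𝐞 (φ i * a)) := by
  have htermwise : HasSum (fun i => ∫ a in (0 : ℝ)..1, c i * 𝐞 (φ i * a))
      (∫ a in (0 : ℝ)..1, ∑' i, c i * 𝐞 (φ i * a)) :=
    hasSum_integral_of_dominated_convergence (fun i _ => ‖c i‖) (fun i => by fun_prop)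
      (fun i => .of_forall fun a _ => (norm_mul_fourierChar _ _).le) (.of_forall fun _ _ => hc)
      intervalIntegrable_const
      (.of_forall fun a _ => (summable_norm_mul_fourierChar hc φ a).of_norm.hasSum)
  convert htermwise using 2 with i
  rw [integral_const_mul, integral_fourierChar_intCast_mul]
  split_ifs <;> simp

lemma hasSum_intervalIntegral_tsum_mul_tsum_mul_tsum [Countable ι₁] [Countable ι₂]
    [Countable ι₃] {f : ι₁ → ℂ} {g : ι₂ → ℂ} {h : ι₃ → ℂ} (hf : Summable (‖f ·‖))
    (hg : Summable (‖g ·‖)) (hh : Summable (‖h ·‖)) (φ : ι₁ → ℤ) (ψ : ι₂ → ℤ) (χ : ι₃ → ℤ) :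
    HasSum (fun p : (ι₁ × ι₂) × ι₃ =>
        if φ p.1.1 + ψ p.1.2 + χ p.2 = 0 then f p.1.1 * g p.1.2 * h p.2 else 0)
      (∫ a in (0 : ℝ)..1, (∑' i, f i * 𝐞 (φ i * a)) * (∑' j, g j * 𝐞 (ψ j * a)) *
        ∑' k, h k * 𝐞 (χ k * a)) := by
  have hprod : ∀ a : ℝ, (∑' i, f i * 𝐞 (φ i * a)) * (∑' j, g j * 𝐞 (ψ j * a)) *
      ∑' k, h k * 𝐞 (χ k * a) = ∑' p : (ι₁ × ι₂) × ι₃,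
        f p.1.1 * g p.1.2 * h p.2 * 𝐞 ((φ p.1.1 + ψ p.1.2 + χ p.2 : ℤ) * a) := fun a => by
    have hf' := summable_norm_mul_fourierChar hf φ a
    have hg' := summable_norm_mul_fourierChar hg ψ a
    rw [tsum_mul_tsum_of_summable_norm hf' hg',
      tsum_mul_tsum_of_summable_norm (hf'.mul_norm hg') (summable_norm_mul_fourierChar hh χ a)]
    refine tsum_congr fun p => ?_
    push_cast
    simp only [add_mul, AddChar.map_add_eq_mul, Circle.coe_mul]
    ring
  simp_rw [hprod]
  exact hasSum_intervalIntegral_tsum_fourierChar ((hf.mul_norm hg).mul_norm hh) _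

end FourierSeries

section PeriodicZeta

lemma norm_pnat_cpow (n : ℕ+) (s : ℂ) : ‖(n : ℂ) ^ s‖ = (n : ℝ) ^ s.re :=
  norm_natCast_cpow_of_pos n.pos s

variable {s : ℂ}

lemma summable_norm_pnat_cpow_neg (hs : 1 < s.re) :
    Summable (fun n : ℕ+ => ‖(n : ℂ) ^ (-s)‖) := by
  simp only [norm_pnat_cpow, neg_re]
  exact (Real.summable_nat_rpow.2 (by linarith)).comp_injective PNat.coe_injective

lemma hasSum_periodicZeta (hs : 1 < s.re) (a : ℝ) :
    HasSum (fun n : ℕ+ => (n : ℂ) ^ (-s) * 𝐞 (n * a)) (periodicZeta s a) := by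
  have hterm : ∀ n : ℕ+, exp (2 * π * I * n * a) / (n : ℂ) ^ s = (n : ℂ) ^ (-s) * 𝐞 (n * a) :=
    fun n => by
      rw [Real.fourierChar_apply, cpow_neg, div_eq_inv_mul]
      push_cast
      ring_nf
  simp_rw [periodicZeta, hterm]
  exact (summable_norm_mul_fourierChar (summable_norm_pnat_cpow_neg hs) (↑) a).of_norm.hasSum

end PeriodicZeta

section Tornheim

variable {s t u : ℂ}

noncomputable def tornheimTriple (s t u : ℂ) (q : ℕ+ × ℕ+ × ℕ+) : ℂ :=
  if q.2.2 = q.1 + q.2.1 then (q.1 : ℂ) ^ (-s) * (q.2.1 : ℂ) ^ (-t) * (q.2.2 : ℂ) ^ (-u) else 0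

lemma one_div_pnat_cpow_mul (m n l : ℕ+) :
    1 / ((m : ℂ) ^ s * (n : ℂ) ^ t * (l : ℂ) ^ u) =
      (m : ℂ) ^ (-s) * (n : ℂ) ^ (-t) * (l : ℂ) ^ (-u) := by
  simp only [cpow_neg, one_div, mul_inv]

lemma summable_tornheim (hs : 1 < s.re) (ht : 1 < t.re) (hu : 0 ≤ u.re) :
    Summable (fun p : ℕ+ × ℕ+ =>
      1 / ((p.1 : ℂ) ^ s * (p.2 : ℂ) ^ t * ((p.1 : ℂ) + (p.2 : ℂ)) ^ u)) := by
  refine .of_norm_bounded ((summable_norm_pnat_cpow_neg hs).mul_norm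
    (summable_norm_pnat_cpow_neg ht)) fun p => ?_
  have hadd : (p.1 : ℂ) + (p.2 : ℂ) = ((p.1 + p.2 : ℕ+) : ℂ) := by push_cast; rfl
  rw [hadd, one_div_pnat_cpow_mul, norm_mul _ (((p.1 + p.2 : ℕ+) : ℂ) ^ (-u)),
    norm_pnat_cpow _ (-u), neg_re]
  refine mul_le_of_le_one_right (norm_nonneg _) (Real.rpow_le_one_of_one_le_of_nonpos ?_ ?_)
  · exact_mod_cast (p.1 + p.2).pos
  · linarith

lemma hasSum_tornheimTriple (hs : 1 < s.re) (ht : 1 < t.re) (hu : 0 ≤ u.re) :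
    HasSum (tornheimTriple s t u) (tornheim s t u) := by
  have hinj : Function.Injective (fun p : ℕ+ × ℕ+ => (p.1, p.2, p.1 + p.2)) :=
    fun p q h => Prod.ext (congrArg Prod.fst h :) (congrArg (·.2.1) h :)
  rw [← hinj.hasSum_iff]
  · refine (summable_tornheim hs ht hu).hasSum.congr_fun fun p => ?_
    rw [Function.comp_apply, tornheimTriple, if_pos rfl, ← one_div_pnat_cpow_mul, PNat.add_coe,
      Nat.cast_add]
  · rintro ⟨m, n, l⟩ hq
    rw [tornheimTriple, if_neg]
    rintro (h : l = m + n)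
    exact hq ⟨(m, n), by rw [h]⟩

lemma hasSum_S₁ (hs : 1 < s.re) (ht : 1 < t.re) (hu : 1 < u.re) :
    HasSum (fun q : ℕ+ × ℕ+ × ℕ+ =>
        (1 + exp (-π * I * (s + t + u))) * tornheimTriple s t u q
          + (exp (-π * I * s) + exp (-π * I * (t + u))) * tornheimTriple u s t (q.2.2, q.1, q.2.1)
          + (exp (-π * I * t) + exp (-π * I * (u + s))) * tornheimTriple t u s (q.2.1, q.2.2, q.1))
      (S₁ s t u) := by
  let rotate : ℕ+ × ℕ+ × ℕ+ ≃ ℕ+ × ℕ+ × ℕ+ := (Equiv.prodComm _ _).trans (Equiv.prodAssoc _ _ _)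
  have hstu := hasSum_tornheimTriple hs ht (zero_le_one.trans hu.le)
  have hust := (rotate.trans rotate).hasSum_iff.2
    (hasSum_tornheimTriple hu hs (zero_le_one.trans ht.le))
  have htus := rotate.hasSum_iff.2 (hasSum_tornheimTriple ht hu (zero_le_one.trans hs.le))
  rw [S₁]
  exact ((hstu.mul_left (1 + exp (-π * I * (s + t + u)))).add
    (hust.mul_left (exp (-π * I * s) + exp (-π * I * (t + u))))).add
    (htus.mul_left (exp (-π * I * t) + exp (-π * I * (u + s))))

end Tornheim

namespace Hfun

/-- `Bool × ℕ+` indexes the nonzero integers, `(true, m) ↦ m` and `(false, m) ↦ -m`. -/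
noncomputable def coeff (s : ℂ) (i : Bool × ℕ+) : ℂ :=
  (if i.1 then 1 else exp (-π * I * s)) * (i.2 : ℂ) ^ (-s)

def freq (i : Bool × ℕ+) : ℤ := if i.1 then (i.2 : ℕ) else -(i.2 : ℕ)

variable {s t u : ℂ}

lemma summable_norm_coeff (hs : 1 < s.re) : Summable (‖coeff s ·‖) := by
  have hsign : Summable (fun b : Bool => ‖(if b then 1 else exp (-π * I * s) : ℂ)‖) :=
    (hasSum_fintype _).summable
  exact (hsign.mul_norm (summable_norm_pnat_cpow_neg hs) :)

lemma hasSum_coeff_mul_fourierChar (hs : 1 < s.re) (a : ℝ) :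
    HasSum (fun i => coeff s i * 𝐞 (freq i * a)) (Hfun s a) := by
  have hneg : HasSum (fun n : ℕ+ => coeff s (false, n) * 𝐞 (freq (false, n) * a))
      (exp (-π * I * s) * periodicZeta s (1 - a)) := by
    refine ((hasSum_periodicZeta hs (1 - a)).mul_left _).congr_fun fun n => ?_
    have := fourierChar_intCast_mul_one_sub n a
    push_cast at this
    simp [coeff, freq, this, mul_assoc]
  have hpos : HasSum (fun n : ℕ+ => coeff s (true, n) * 𝐞 (freq (true, n) * a))
      (periodicZeta s a) := by
    simpa [coeff, freq] using hasSum_periodicZeta hs a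
  exact (Equiv.boolProdEquivSum ℕ+).symm.hasSum_iff.1 (hneg.sum hpos)

lemma hasSum_intervalIntegral_mul (hs : 1 < s.re) (ht : 1 < t.re) (hu : 1 < u.re) :
    HasSum (fun p : ((Bool × ℕ+) × (Bool × ℕ+)) × (Bool × ℕ+) =>
        if freq p.1.1 + freq p.1.2 + -freq p.2 = 0 then coeff s p.1.1 * coeff t p.1.2 * coeff u p.2
        else 0)
      (∫ a in (0 : ℝ)..1, Hfun s a * Hfun t a * Hfun u (1 - a)) := by
  have hseries : ∀ a : ℝ, Hfun s a * Hfun t a * Hfun u (1 - a) =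
      (∑' i, coeff s i * 𝐞 (freq i * a)) * (∑' j, coeff t j * 𝐞 (freq j * a)) *
        ∑' k, coeff u k * 𝐞 ((-freq k : ℤ) * a) := fun a => by
    simp only [← fourierChar_intCast_mul_one_sub, (hasSum_coeff_mul_fourierChar hs a).tsum_eq,
      (hasSum_coeff_mul_fourierChar ht a).tsum_eq,
      (hasSum_coeff_mul_fourierChar hu (1 - a)).tsum_eq]
  simp_rw [hseries]
  exact hasSum_intervalIntegral_tsum_mul_tsum_mul_tsum (summable_norm_coeff hs)
    (summable_norm_coeff ht) (summable_norm_coeff hu) _ _ _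

lemma sum_signs_coeff_mul (m n l : ℕ+) :
    ∑ b : Bool × Bool × Bool,
      (if freq (b.1, m) + freq (b.2.1, n) + -freq (b.2.2, l) = 0 then
        coeff s (b.1, m) * coeff t (b.2.1, n) * coeff u (b.2.2, l) else 0) =
      (1 + exp (-π * I * (s + t + u))) * tornheimTriple s t u (m, n, l)
        + (exp (-π * I * s) + exp (-π * I * (t + u))) * tornheimTriple u s t (l, m, n)
        + (exp (-π * I * t) + exp (-π * I * (u + s))) * tornheimTriple t u s (n, l, m) := by
  simp only [Fintype.sum_prod_type, Fintype.sum_bool, freq, coeff, tornheimTriple, if_true,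
    Bool.false_eq_true, if_false, ← PNat.coe_inj, PNat.add_coe, mul_add, Complex.exp_add]
  have := m.pos
  have := n.pos
  have := l.pos
  by_cases h₁ : (l : ℕ) = m + n
  · simp (disch := omega) only [if_pos, if_neg]
    ring
  by_cases h₂ : (n : ℕ) = l + m
  · simp (disch := omega) only [if_pos, if_neg]
    ring
  by_cases h₃ : (m : ℕ) = n + l
  · simp (disch := omega) only [if_pos, if_neg]
    ring
  · simp (disch := omega) only [if_neg]
    ring

end Hfun

def tripleProdTripleEquiv (α β : Type*) :
    (α × α × α) × (β × β × β) ≃ ((β × α) × (β × α)) × (β × α) where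
  toFun p := (((p.2.1, p.1.1), (p.2.2.1, p.1.2.1)), (p.2.2.2, p.1.2.2))
  invFun p := ((p.1.1.2, p.1.2.2, p.2.2), (p.1.1.1, p.1.2.1, p.2.1))
  left_inv _ := rfl
  right_inv _ := rfl

theorem S₁_integral_repr (s t u : ℂ) (hs : 1 < s.re) (ht : 1 < t.re) (hu : 1 < u.re) :
    S₁ s t u = ∫ a in (0 : ℝ)..1, Hfun s a * Hfun t a * Hfun u (1 - a) := by
  have hI := (tripleProdTripleEquiv ℕ+ Bool).hasSum_iff.2
    (Hfun.hasSum_intervalIntegral_mul hs ht hu)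
  refine (hasSum_S₁ hs ht hu).unique (hI.prod_fiberwise fun ⟨m, n, l⟩ => ?_)
  rw [← Hfun.sum_signs_coeff_mul]
  exact hasSum_fintype _
end

section
/- For all complex numbers s, t, u with Re s > 1, Re t > 1 and Re u > 1, one has S_3(s,t,u) = 4 ∫_0^1 ( Σ_{l=1}^∞ cos(2πla)/l^s )( Σ_{m=1}^∞ cos(2πma)/m^t )( Σ_{n=1}^∞ cos(2πna)/n^u ) da, where for each a ∈ (0,1) the three series converge. -/
open Real Complex

/-!
Expanding the product of the three cosine series gives a triple series over `(l, m, n)` dominated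
by `l ^ (-Re s) m ^ (-Re t) n ^ (-Re u)`, so it can be integrated term by term. By the
product-to-sum formula and the orthogonality of `a ↦ cos (2πka)` on `[0, 1]`, the integral of
`cos (2πla) cos (2πma) cos (2πna)` is a quarter of the number of relations `l + m = n`,
`m + n = l`, `n + l = m` that hold. The three sub-series cut out by these relations are
`T(s, t, u)`, `T(t, u, s)` and `T(u, s, t)`, the last two after cyclically relabelling `(l, m, n)`.
-/

lemma summable_norm_one_div_pnat_cpow {s : ℂ} (hs : 1 < s.re) :
    Summable fun l : ℕ+ => ‖1 / (l : ℂ) ^ s‖ :=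
  summable_norm_iff.2 <| (summable_pnat_iff_summable_nat (f := fun n : ℕ => 1 / (n : ℂ) ^ s)).2
    (Complex.summable_one_div_nat_cpow.2 hs)

lemma norm_ofReal_cos_div_le (x : ℝ) (z : ℂ) : ‖(Real.cos x : ℂ) / z‖ ≤ ‖1 / z‖ := by
  rw [div_eq_mul_one_div, norm_mul, Complex.norm_real, Real.norm_eq_abs]
  exact mul_le_of_le_one_left (norm_nonneg _) (Real.abs_cos_le_one x)

theorem hasSum_mul_mul_of_summable_norm {ι₁ ι₂ ι₃ R : Type*} [NormedRing R] [CompleteSpace R]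
    {f : ι₁ → R} {g : ι₂ → R} {h : ι₃ → R} (hf : Summable fun i => ‖f i‖)
    (hg : Summable fun j => ‖g j‖) (hh : Summable fun k => ‖h k‖) :
    HasSum (fun p : ι₁ × ι₂ × ι₃ => f p.1 * (g p.2.1 * h p.2.2))
      ((∑' i, f i) * ((∑' j, g j) * ∑' k, h k)) := by
  have hgh := hg.of_norm.hasSum.mul hh.of_norm.hasSum (summable_mul_of_summable_norm hg hh)
  have hfgh := summable_mul_of_summable_norm hf (hg.mul_norm hh)
  have hsum := hf.of_norm.hasSum.mul hgh hfgh
  beta_reduce at hsum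
  exact hsum

theorem intervalIntegral.hasSum_integral_of_norm_le {ι E : Type*} [Countable ι]
    [NormedAddCommGroup E] [NormedSpace ℝ E] {F : ι → ℝ → E} {f : ℝ → E} {B : ι → ℝ} {a b : ℝ}
    (hF : ∀ i, Continuous (F i)) (hFB : ∀ i x, ‖F i x‖ ≤ B i) (hB : Summable B)
    (hf : ∀ x, HasSum (fun i => F i x) (f x)) :
    HasSum (fun i => ∫ x in a..b, F i x) (∫ x in a..b, f x) :=
  intervalIntegral.hasSum_integral_of_dominated_convergence (fun i _ => B i)
    (fun i => (hF i).aestronglyMeasurable) (fun i => .of_forall fun x _ => hFB i x)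
    (.of_forall fun _ _ => hB) intervalIntegrable_const (.of_forall fun x _ => hf x)

lemma integral_cos_two_pi_int_mul (k : ℤ) :
    ∫ a in (0 : ℝ)..1, Real.cos (2 * π * k * a) = if k = 0 then 1 else 0 := by
  split_ifs with hk
  · simp [hk]
  · have hc : 2 * π * k ≠ 0 := by simp [hk, Real.pi_ne_zero]
    have hsin : Real.sin (2 * π * k) = 0 := by
      simpa [mul_comm, mul_left_comm] using Real.sin_int_mul_pi (2 * k)
    simp [hc, hsin]

lemma Real.cos_mul_cos_mul_cos (x y z : ℝ) :
    Real.cos x * Real.cos y * Real.cos z =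
      (Real.cos (x + y + z) + Real.cos (x + y - z) + Real.cos (y + z - x)
        + Real.cos (z + x - y)) / 4 := by
  simp only [Real.cos_add, Real.cos_sub, Real.sin_add]
  ring

lemma integral_cos_mul_cos_mul_cos (l m n : ℤ) :
    ∫ a in (0 : ℝ)..1, Real.cos (2 * π * l * a) * Real.cos (2 * π * m * a) * Real.cos (2 * π * n * a)
      = ((if l + m + n = 0 then 1 else 0) + (if l + m = n then 1 else 0)
          + (if m + n = l then 1 else 0) + (if n + l = m then 1 else 0)) / 4 := by
  have hcont (k : ℤ) : IntervalIntegrable (fun a => Real.cos (2 * π * k * a)) MeasureTheory.volume 0 1 :=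
    (by fun_prop : Continuous fun a : ℝ => Real.cos (2 * π * k * a)).intervalIntegrable 0 1
  have hprod (a : ℝ) : Real.cos (2 * π * l * a) * Real.cos (2 * π * m * a) * Real.cos (2 * π * n * a)
      = (Real.cos (2 * π * ((l + m + n : ℤ) : ℝ) * a) + Real.cos (2 * π * ((l + m - n : ℤ) : ℝ) * a)
        + Real.cos (2 * π * ((m + n - l : ℤ) : ℝ) * a)
        + Real.cos (2 * π * ((n + l - m : ℤ) : ℝ) * a)) / 4 := by
    rw [Real.cos_mul_cos_mul_cos]
    push_cast
    ring_nf
  simp only [hprod]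
  rw [intervalIntegral.integral_div,
    intervalIntegral.integral_add (((hcont _).add (hcont _)).add (hcont _)) (hcont _),
    intervalIntegral.integral_add ((hcont _).add (hcont _)) (hcont _),
    intervalIntegral.integral_add (hcont _) (hcont _)]
  simp only [integral_cos_two_pi_int_mul, sub_eq_zero]

def Equiv.prodCycle (α : Type*) : α × α × α ≃ α × α × α where
  toFun p := (p.2.1, p.2.2, p.1)
  invFun p := (p.2.2, p.1, p.2.1)
  left_inv _ := rfl
  right_inv _ := rfl

lemma tsum_ite_add_eq {α E : Type*} [Add α] [DecidableEq α] [AddCommMonoid E] [TopologicalSpace E]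
    (f : α × α × α → E) :
    ∑' p : α × α × α, (if p.1 + p.2.1 = p.2.2 then f p else 0)
      = ∑' q : α × α, f (q.1, q.2, q.1 + q.2) := by
  have hinj : Function.Injective fun q : α × α => (q.1, q.2, q.1 + q.2) :=
    fun q q' h => by
      simp only [Prod.mk.injEq] at h
      exact Prod.ext h.1 h.2.1
  rw [← hinj.tsum_eq]
  · simp
  · intro p hp
    have hsum : p.1 + p.2.1 = p.2.2 := by
      by_contra h
      exact hp (if_neg h)
    exact ⟨(p.1, p.2.1), by simp [hsum]⟩

section Tornheim

variable (s t u : ℂ)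

noncomputable def cosTerm (a : ℝ) (l : ℕ+) : ℂ :=
  (Real.cos (2 * π * l * a) : ℂ) / (l : ℂ) ^ s

noncomputable def tripleTerm (p : ℕ+ × ℕ+ × ℕ+) : ℂ :=
  1 / (p.1 : ℂ) ^ s * (1 / (p.2.1 : ℂ) ^ t * (1 / (p.2.2 : ℂ) ^ u))

def sumCoordCount (p : ℕ+ × ℕ+ × ℕ+) : ℕ :=
  (if p.1 + p.2.1 = p.2.2 then 1 else 0) + (if p.2.1 + p.2.2 = p.1 then 1 else 0)
    + (if p.2.2 + p.1 = p.2.1 then 1 else 0)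

lemma continuous_cosTerm (l : ℕ+) : Continuous fun a => cosTerm s a l := by
  unfold cosTerm
  fun_prop

lemma tripleTerm_prodCycle (p : ℕ+ × ℕ+ × ℕ+) :
    tripleTerm s t u (Equiv.prodCycle ℕ+ p) = tripleTerm u s t p := by
  simp only [tripleTerm, Equiv.prodCycle, Equiv.coe_fn_mk]
  ring

lemma tornheim_eq_tsum_ite :
    tornheim s t u = ∑' p, if p.1 + p.2.1 = p.2.2 then tripleTerm s t u p else 0 := by
  rw [tsum_ite_add_eq, tornheim]
  refine tsum_congr fun q => ?_
  simp only [tripleTerm, PNat.add_coe, Nat.cast_add]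
  ring

lemma tornheim_cycle_eq_tsum_ite :
    tornheim t u s = ∑' p, if p.2.1 + p.2.2 = p.1 then tripleTerm s t u p else 0 := by
  rw [tornheim_eq_tsum_ite, ← (Equiv.prodCycle ℕ+).tsum_eq]
  refine tsum_congr fun p => ?_
  rw [tripleTerm_prodCycle]
  rfl

lemma tornheim_cycle_cycle_eq_tsum_ite :
    tornheim u s t = ∑' p, if p.2.2 + p.1 = p.2.1 then tripleTerm s t u p else 0 := by
  rw [tornheim_cycle_eq_tsum_ite, ← (Equiv.prodCycle ℕ+).tsum_eq]
  refine tsum_congr fun p => ?_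
  rw [tripleTerm_prodCycle]
  rfl

lemma integral_cosTerm_mul (p : ℕ+ × ℕ+ × ℕ+) :
    ∫ a in (0 : ℝ)..1, cosTerm s a p.1 * (cosTerm t a p.2.1 * cosTerm u a p.2.2)
      = (sumCoordCount p : ℂ) / 4 * tripleTerm s t u p := by
  obtain ⟨l, m, n⟩ := p
  have hprod (a : ℝ) : cosTerm s a l * (cosTerm t a m * cosTerm u a n)
      = ((Real.cos (2 * π * l * a) * Real.cos (2 * π * m * a) * Real.cos (2 * π * n * a) : ℝ) : ℂ)
        * tripleTerm s t u (l, m, n) := by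
    simp only [cosTerm, tripleTerm]
    push_cast
    ring
  have hsum_iff (a b c : ℕ+) : (a : ℤ) + b = c ↔ a + b = c := by
    rw [← PNat.coe_inj, PNat.add_coe]
    omega
  have hreal := integral_cos_mul_cos_mul_cos l m n
  simp only [Int.cast_natCast, hsum_iff, if_neg (by positivity : (l : ℤ) + m + n ≠ 0)] at hreal
  simp only [hprod, intervalIntegral.integral_mul_const, intervalIntegral.integral_ofReal, hreal,
    sumCoordCount]
  push_cast [apply_ite ((↑) : ℝ → ℂ)]
  ring

variable {s t u}

lemma summable_norm_cosTerm (hs : 1 < s.re) (a : ℝ) : Summable fun l => ‖cosTerm s a l‖ :=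
  (summable_norm_one_div_pnat_cpow hs).of_nonneg_of_le (fun _ => norm_nonneg _)
    fun _ => norm_ofReal_cos_div_le _ _

lemma summable_norm_tripleTerm (hs : 1 < s.re) (ht : 1 < t.re) (hu : 1 < u.re) :
    Summable fun p => ‖tripleTerm s t u p‖ := by
  have htu := (summable_norm_one_div_pnat_cpow ht).mul_norm (summable_norm_one_div_pnat_cpow hu)
  have h := (summable_norm_one_div_pnat_cpow hs).mul_norm htu
  unfold tripleTerm
  exact h

lemma norm_cosTerm_mul_le (p : ℕ+ × ℕ+ × ℕ+) (a : ℝ) :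
    ‖cosTerm s a p.1 * (cosTerm t a p.2.1 * cosTerm u a p.2.2)‖ ≤ ‖tripleTerm s t u p‖ := by
  simp only [tripleTerm, norm_mul]
  gcongr <;> exact norm_ofReal_cos_div_le _ _

lemma tsum_sumCoordCount_mul_tripleTerm (hs : 1 < s.re) (ht : 1 < t.re) (hu : 1 < u.re) :
    ∑' p, (sumCoordCount p : ℂ) * tripleTerm s t u p = S₃ s t u := by
  have hpiece (c : ℕ+ × ℕ+ × ℕ+ → Prop) [DecidablePred c] :
      Summable fun p => if c p then tripleTerm s t u p else 0 :=
    (summable_norm_tripleTerm hs ht hu).of_norm_bounded fun p => by split_ifs <;> simp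
  have hsplit (p : ℕ+ × ℕ+ × ℕ+) : (sumCoordCount p : ℂ) * tripleTerm s t u p
      = (if p.1 + p.2.1 = p.2.2 then tripleTerm s t u p else 0)
        + (if p.2.1 + p.2.2 = p.1 then tripleTerm s t u p else 0)
        + (if p.2.2 + p.1 = p.2.1 then tripleTerm s t u p else 0) := by
    simp only [sumCoordCount]
    push_cast
    simp only [add_mul, ite_mul, one_mul, zero_mul]
  rw [tsum_congr hsplit, ((hpiece _).add (hpiece _)).tsum_add (hpiece _),
    (hpiece _).tsum_add (hpiece _), ← tornheim_eq_tsum_ite, ← tornheim_cycle_eq_tsum_ite,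
    ← tornheim_cycle_cycle_eq_tsum_ite, S₃]
  ring

lemma hasSum_integral_tsum_cosTerm_mul (hs : 1 < s.re) (ht : 1 < t.re) (hu : 1 < u.re) :
    HasSum (fun p => (sumCoordCount p : ℂ) / 4 * tripleTerm s t u p)
      (∫ a in (0 : ℝ)..1, (∑' l, cosTerm s a l) * (∑' m, cosTerm t a m) * ∑' n, cosTerm u a n) := by
  simp only [← integral_cosTerm_mul, mul_assoc]
  exact intervalIntegral.hasSum_integral_of_norm_le
    (fun p => (continuous_cosTerm s p.1).mul
      ((continuous_cosTerm t p.2.1).mul (continuous_cosTerm u p.2.2)))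
    norm_cosTerm_mul_le (summable_norm_tripleTerm hs ht hu) fun a =>
      hasSum_mul_mul_of_summable_norm (summable_norm_cosTerm hs a) (summable_norm_cosTerm ht a)
        (summable_norm_cosTerm hu a)

end Tornheim

theorem S₃_integral_repr (s t u : ℂ) (hs : 1 < s.re) (ht : 1 < t.re) (hu : 1 < u.re) :
    (∀ a : ℝ, a ∈ Set.Ioo (0 : ℝ) 1 →
      Summable (fun l : ℕ+ => (Real.cos (2 * π * l * a) : ℂ) / (l : ℂ) ^ s) ∧
      Summable (fun m : ℕ+ => (Real.cos (2 * π * m * a) : ℂ) / (m : ℂ) ^ t) ∧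
      Summable (fun n : ℕ+ => (Real.cos (2 * π * n * a) : ℂ) / (n : ℂ) ^ u)) ∧
    S₃ s t u = 4 * ∫ a in (0 : ℝ)..1,
      (∑' l : ℕ+, (Real.cos (2 * π * l * a) : ℂ) / (l : ℂ) ^ s)
        * (∑' m : ℕ+, (Real.cos (2 * π * m * a) : ℂ) / (m : ℂ) ^ t)
        * (∑' n : ℕ+, (Real.cos (2 * π * n * a) : ℂ) / (n : ℂ) ^ u) := by
  refine ⟨fun a _ => ⟨(summable_norm_cosTerm hs a).of_norm, (summable_norm_cosTerm ht a).of_norm,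
    (summable_norm_cosTerm hu a).of_norm⟩, ?_⟩
  change S₃ s t u = 4 * ∫ a in (0 : ℝ)..1,
    (∑' l, cosTerm s a l) * (∑' m, cosTerm t a m) * ∑' n, cosTerm u a n
  rw [← (hasSum_integral_tsum_cosTerm_mul hs ht hu).tsum_eq, ← tsum_mul_left,
    ← tsum_sumCoordCount_mul_tripleTerm hs ht hu]
  congr 1
  ext p
  ring
end
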